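/- Let p be a prime, c a positive integer prime to p, r ≥ 1, (l_1,...,l_r) nonnegative integers, (ε_1,...,ε_r) c-th roots of unity, and (κ_1,...,κ_{r-1}) nonnegative integers. Define, for h a positive integer, S_h = Σ over tuples (u_1,...,u_r) of nonnegative integers with u_1 < h and u_{i-1} + κ_{i-1}·h < u_i < u_{i-1} + (κ_{i-1}+1)·h for 2 ≤ i ≤ r, of (ε_2/ε_1)^{u_1} ··· (1/ε_r)^{u_r} · u_1^{l_1} ··· u_r^{l_r} ∈ ℚ(μ_c). Then there exist elements B_{l,ξ} ∈ ℚ(μ_c), indexed by 0 ≤ l ≤ l_1+...+l_r+r and ξ ∈ μ_c, depending only on (l_i), (ε_i), (κ_i), such that for all h ≥ 1: S_h = Σ_{l,ξ} B_{l,ξ} · h^l · ξ^h. -/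

import Mathlib

open scoped Classical

/-- `u_{i-1}` with the convention `u_0 = 0`. -/
def prevOr0 {r : ℕ} (u : Fin r → ℕ) (i : Fin r) : ℕ :=
  if _h : 0 < (i : ℕ) then u ⟨(i : ℕ) - 1, lt_of_le_of_lt (Nat.sub_le _ _) i.isLt⟩ else 0

/-!
Write `δ_i = ε_{i+1} / ε_i`. Summing over `u_1 < h` first, `S_h = ∑_{x<h} δ_1^x x^{l_1} T(h, x)`,
where `T(h, t)` is the same kind of sum over the chains `u_2, …, u_r` that start from `u_1 = t`.
By induction on the length of the chain, `T` agrees for `h ≥ 1` with a combination of the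
functions `ζ^h h^a ξ^t t^b` (`ζ, ξ ∈ μ_c`, `a + b ≤ ∑ (l_j + 1)`): the next element runs over the
window `t + κh < x < t + (κ + 1)h`, and a sum `∑_{v<h} ξ^(s+v) (s+v)^b` is again of this form,
one degree higher, because `∑_{v<h} ξ^v v^b` is: up to lower-order terms, `ξ^h h^b` is the forward
difference of `ξ^h h^b / (ξ - 1)`, or of `h^(b+1) / (b + 1)` when `ξ = 1`. Setting `t = 0` at the
end leaves a quasi-polynomial in `h`.
-/

open Finset

section QuasiPoly

variable {K : Type*} [Field K] {c : ℕ}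

variable (c) in
def quasiPoly (D : ℕ) : Submodule K (ℕ → ℕ → K) :=
  Submodule.span K {F | ∃ (a b : ℕ) (ζ ξ : K), a + b ≤ D ∧ ζ ^ c = 1 ∧ ξ ^ c = 1 ∧
    F = fun (h t : ℕ) => ζ ^ h * (h : K) ^ a * (ξ ^ t * (t : K) ^ b)}

theorem quasiPoly_mono {D E : ℕ} (hDE : D ≤ E) : quasiPoly (K := K) c D ≤ quasiPoly c E :=
  Submodule.span_mono fun _ ⟨a, b, ζ, ξ, hab, hζ, hξ, hF⟩ =>
    ⟨a, b, ζ, ξ, hab.trans hDE, hζ, hξ, hF⟩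

theorem monomial_mem_quasiPoly {D a b : ℕ} {ζ ξ : K} (hab : a + b ≤ D) (hζ : ζ ^ c = 1)
    (hξ : ξ ^ c = 1) :
    (fun (h t : ℕ) => ζ ^ h * (h : K) ^ a * (ξ ^ t * (t : K) ^ b)) ∈ quasiPoly c D :=
  Submodule.subset_span ⟨a, b, ζ, ξ, hab, hζ, hξ, rfl⟩

theorem monomial_left_mem_quasiPoly {D a : ℕ} {ζ : K} (ha : a ≤ D) (hζ : ζ ^ c = 1) :
    (fun (h _ : ℕ) => ζ ^ h * (h : K) ^ a) ∈ quasiPoly c D := by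
  simpa using monomial_mem_quasiPoly (b := 0) (ξ := 1) (by omega) hζ (one_pow c)

theorem monomial_right_mem_quasiPoly {D b : ℕ} {ξ : K} (hb : b ≤ D) (hξ : ξ ^ c = 1) :
    (fun (_ t : ℕ) => ξ ^ t * (t : K) ^ b) ∈ quasiPoly c D := by
  simpa using monomial_mem_quasiPoly (a := 0) (ζ := 1) (by omega) (one_pow c) hξ

theorem const_mem_quasiPoly (D : ℕ) (x : K) : (fun (_ _ : ℕ) => x) ∈ quasiPoly c D := by
  convert Submodule.smul_mem _ x
    (monomial_right_mem_quasiPoly (b := 0) (Nat.zero_le D) (one_pow c)) using 1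
  funext h t
  simp

theorem mul_mem_quasiPoly {D E : ℕ} {F G : ℕ → ℕ → K} (hF : F ∈ quasiPoly c D)
    (hG : G ∈ quasiPoly c E) : F * G ∈ quasiPoly c (D + E) := by
  have hFG := Submodule.mul_mem_mul hF hG
  rw [quasiPoly, quasiPoly, Submodule.span_mul_span] at hFG
  refine Submodule.span_le.mpr ?_ hFG
  rintro _ ⟨_, ⟨a, b, ζ, ξ, hab, hζ, hξ, rfl⟩, _, ⟨a', b', ζ', ξ', hab', hζ', hξ', rfl⟩, rfl⟩
  refine Submodule.subset_span ⟨a + a', b + b', ζ * ζ', ξ * ξ', by omega,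
    by rw [mul_pow, hζ, hζ', one_mul], by rw [mul_pow, hξ, hξ', one_mul], ?_⟩
  funext h t
  simp only [Pi.mul_apply]
  ring

theorem comp_shear_mem_quasiPoly {D : ℕ} (κ : ℕ) {F : ℕ → ℕ → K} (hF : F ∈ quasiPoly c D) :
    (fun h t => F h (t + κ * h)) ∈ quasiPoly c D := by
  induction hF using Submodule.span_induction with
  | mem F hF =>
    obtain ⟨a, b, ζ, ξ, hab, hζ, hξ, rfl⟩ := hF
    have hζξ : (ζ * ξ ^ κ) ^ c = 1 := by
      rw [mul_pow, ← pow_mul, mul_comm κ, pow_mul, hζ, hξ, one_pow, one_mul]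
    have expand : (fun (h t : ℕ) => ζ ^ h * (h : K) ^ a *
          (ξ ^ (t + κ * h) * ((t + κ * h : ℕ) : K) ^ b)) =
        ∑ m ∈ range (b + 1), ((b.choose m * κ ^ (b - m) : ℕ) : K) •
          fun (h t : ℕ) => (ζ * ξ ^ κ) ^ h * (h : K) ^ (a + (b - m)) * (ξ ^ t * (t : K) ^ m) := by
      funext h t
      simp only [Finset.sum_apply, Pi.smul_apply, smul_eq_mul, Nat.cast_add, Nat.cast_mul, add_pow,
        mul_sum]
      refine sum_congr rfl fun m _ => ?_
      push_cast
      ring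
    rw [expand]
    exact Submodule.sum_mem _ fun m hm => Submodule.smul_mem _ _
      (monomial_mem_quasiPoly (by have := mem_range.mp hm; omega) hζξ hξ)
  | zero => exact zero_mem _
  | add F G _ _ hF hG => exact add_mem hF hG
  | smul x F _ hF => exact Submodule.smul_mem _ x hF

theorem exists_coeffs_of_mem_quasiPoly (hc : 0 < c) {L : ℕ} {F : ℕ → ℕ → K}
    (hF : F ∈ quasiPoly c L) :
    ∃ B : ℕ → K → K, ∀ h : ℕ, F h 0 =
      ∑ l ∈ range (L + 1), ∑ ξ ∈ Polynomial.nthRootsFinset c (1 : K),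
        B l ξ * (h : K) ^ l * ξ ^ h := by
  induction hF using Submodule.span_induction with
  | mem F hF =>
    obtain ⟨a, b, ζ, ξ, hab, hζ, hξ, rfl⟩ := hF
    refine ⟨fun l ξ' => if l = a then if ξ' = ζ then (0 : K) ^ b else 0 else 0, fun h => ?_⟩
    have ha : a ∈ range (L + 1) := mem_range.mpr (by omega)
    have hζ' : ζ ∈ Polynomial.nthRootsFinset c (1 : K) :=
      (Polynomial.mem_nthRootsFinset hc 1).mpr hζ
    simp [ite_mul, sum_ite_eq', ha, hζ']
    ring
  | zero => exact ⟨0, fun h => by simp⟩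
  | add F G _ _ hF hG =>
    obtain ⟨B, hB⟩ := hF
    obtain ⟨B', hB'⟩ := hG
    exact ⟨B + B', fun h => by simp [hB, hB', add_mul, sum_add_distrib]⟩
  | smul x F _ hF =>
    obtain ⟨B, hB⟩ := hF
    exact ⟨x • B, fun h => by simp [hB, mul_sum, mul_assoc]⟩

theorem add_one_pow_eq (x : K) (n : ℕ) :
    (x + 1) ^ n = x ^ n + ∑ j ∈ range n, (n.choose j : K) * x ^ j := by
  rw [add_pow, sum_range_succ]
  simp [mul_comm, add_comm]

variable [CharZero K]

theorem exists_fwdDiff_eq_add_lower {ξ : K} (hξ : ξ ^ c = 1) (a : ℕ) :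
    ∃ G : ℕ → K, ∃ d : ℕ → K, (fun (h _ : ℕ) => G h) ∈ quasiPoly c (a + 1) ∧
      ∀ h : ℕ, G (h + 1) - G h =
        ξ ^ h * (h : K) ^ a + ∑ j ∈ range a, d j * (ξ ^ h * (h : K) ^ j) := by
  by_cases hξ1 : ξ = 1
  · subst hξ1
    have ha : (a : K) + 1 ≠ 0 := by exact_mod_cast a.succ_ne_zero
    refine ⟨fun h => ((a : K) + 1)⁻¹ * (h : K) ^ (a + 1),
      fun j => ((a : K) + 1)⁻¹ * ((a + 1).choose j : K), ?_, fun h => ?_⟩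
    · convert Submodule.smul_mem _ ((a : K) + 1)⁻¹
        (monomial_left_mem_quasiPoly (ζ := (1 : K)) (a := a + 1) le_rfl (one_pow c)) using 1
      funext h t
      simp
    · simp only [one_pow, one_mul, Nat.cast_add_one, add_one_pow_eq, sum_range_succ,
        Nat.choose_succ_self_right, mul_assoc, ← mul_sum]
      field_simp
      ring
  · have hξ1' : ξ - 1 ≠ 0 := sub_ne_zero.mpr hξ1
    refine ⟨fun h => (ξ - 1)⁻¹ * (ξ ^ h * (h : K) ^ a),
      fun j => ξ * (ξ - 1)⁻¹ * (a.choose j : K), ?_, fun h => ?_⟩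
    · exact Submodule.smul_mem _ (ξ - 1)⁻¹ (monomial_left_mem_quasiPoly (a := a) (by omega) hξ)
    · simp only [Nat.cast_add_one, add_one_pow_eq, pow_succ, mul_assoc, ← mul_sum,
        mul_left_comm _ (ξ ^ h)]
      field_simp
      ring

theorem sum_range_pow_mem_quasiPoly {ξ : K} (hξ : ξ ^ c = 1) (a : ℕ) :
    (fun (h _ : ℕ) => ∑ v ∈ range h, ξ ^ v * (v : K) ^ a) ∈ quasiPoly c (a + 1) := by
  induction a using Nat.strong_induction_on with
  | _ a ih =>
  obtain ⟨G, d, hG, hΔ⟩ := exists_fwdDiff_eq_add_lower hξ a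
  have telescope : (fun (h _ : ℕ) => ∑ v ∈ range h, ξ ^ v * (v : K) ^ a) =
      (fun (h _ : ℕ) => G h) - (fun (_ _ : ℕ) => G 0) -
        ∑ j ∈ range a, d j • fun (h _ : ℕ) => ∑ v ∈ range h, ξ ^ v * (v : K) ^ j := by
    funext h t
    have := sum_range_sub G h
    simp only [hΔ, sum_add_distrib] at this
    simp only [Pi.sub_apply, Finset.sum_apply, Pi.smul_apply, smul_eq_mul, ← this, mul_sum]
    rw [sum_comm]
    ring
  rw [telescope]
  refine sub_mem (sub_mem hG (const_mem_quasiPoly _ _)) (Submodule.sum_mem _ fun j hj => ?_)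
  have hj := mem_range.mp hj
  exact Submodule.smul_mem _ _ (quasiPoly_mono (by omega) (ih j hj))

theorem sum_range_add_mem_quasiPoly {D : ℕ} {F : ℕ → ℕ → K} (hF : F ∈ quasiPoly c D) :
    (fun (h s : ℕ) => ∑ v ∈ range h, F h (s + v)) ∈ quasiPoly c (D + 1) := by
  induction hF using Submodule.span_induction with
  | mem F hF =>
    obtain ⟨a, b, ζ, ξ, hab, hζ, hξ, rfl⟩ := hF
    have expand : (fun (h s : ℕ) => ∑ v ∈ range h,
          ζ ^ h * (h : K) ^ a * (ξ ^ (s + v) * ((s + v : ℕ) : K) ^ b)) =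
        ∑ m ∈ range (b + 1), (b.choose m : K) •
          ((fun (h s : ℕ) => ζ ^ h * (h : K) ^ a * (ξ ^ s * (s : K) ^ m)) *
            fun (h _ : ℕ) => ∑ v ∈ range h, ξ ^ v * (v : K) ^ (b - m)) := by
      funext h s
      simp only [Finset.sum_apply, Pi.smul_apply, Pi.mul_apply, smul_eq_mul, mul_sum, Nat.cast_add,
        add_pow]
      rw [sum_comm]
      refine sum_congr rfl fun m _ => sum_congr rfl fun v _ => ?_
      ring
    rw [expand]
    refine Submodule.sum_mem _ fun m hm => Submodule.smul_mem _ _ (quasiPoly_mono ?_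
      (mul_mem_quasiPoly (monomial_mem_quasiPoly le_rfl hζ hξ) (sum_range_pow_mem_quasiPoly hξ _)))
    have := mem_range.mp hm
    omega
  | zero =>
    convert zero_mem (quasiPoly (K := K) c (D + 1)) using 1
    funext h s
    simp
  | add F G _ _ hF hG =>
    convert add_mem hF hG using 1
    funext h s
    simp [sum_add_distrib]
  | smul x F _ hF =>
    convert Submodule.smul_mem _ x hF using 1
    funext h s
    simp [mul_sum]

end QuasiPoly

theorem sum_Ioo_eq_sum_range_sub {M : Type*} [AddCommGroup M] (f : ℕ → M) (s : ℕ) {h : ℕ}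
    (hh : 0 < h) : ∑ x ∈ Ioo s (s + h), f x = ∑ v ∈ range h, f (s + v) - f s := by
  rw [← Nat.add_sub_cancel_left (n := s) (m := h), ← sum_Ico_eq_sum_range,
    sum_eq_sum_Ico_succ_bot (by omega), Nat.add_sub_cancel_left, Ico_add_one_left_eq_Ioo]
  abel

section GappedChain

variable {R : Type*} [CommSemiring R]

def chainSum (h : ℕ) : {n : ℕ} → (Fin n → ℕ) → (Fin n → ℕ → R) → ℕ → R
  | 0, _, _, _ => 1
  | _ + 1, κ, w, t =>
    ∑ x ∈ Ioo (t + κ 0 * h) (t + (κ 0 + 1) * h), w 0 x * chainSum h (Fin.tail κ) (Fin.tail w) x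

def IsGappedChain {n : ℕ} (h : ℕ) (κ : Fin n → ℕ) (u : Fin (n + 1) → ℕ) : Prop :=
  ∀ j : Fin n, u j.castSucc + κ j * h < u j.succ ∧ u j.succ < u j.castSucc + (κ j + 1) * h

theorem isGappedChain_cons {n : ℕ} (h t : ℕ) (κ : Fin (n + 1) → ℕ) (u : Fin (n + 1) → ℕ) :
    IsGappedChain h κ (Fin.cons t u) ↔
      (t + κ 0 * h < u 0 ∧ u 0 < t + (κ 0 + 1) * h) ∧ IsGappedChain h (Fin.tail κ) u := by
  simp [IsGappedChain, Fin.forall_fin_succ, Fin.tail]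

theorem sum_filter_piFinset_succ {α : Type*} {n : ℕ} (s : Finset α)
    (P : (Fin (n + 1) → α) → Prop) [DecidablePred P] (p : α → Prop) [DecidablePred p]
    (Q : α → (Fin n → α) → Prop) [∀ x, DecidablePred (Q x)]
    (hPQ : ∀ x v, P (Fin.cons x v) ↔ p x ∧ Q x v) (w : Fin (n + 1) → α → R) :
    ∑ u ∈ {u ∈ Fintype.piFinset fun _ => s | P u}, ∏ i, w i (u i) =
      ∑ x ∈ {x ∈ s | p x}, w 0 x *
        ∑ v ∈ {v ∈ Fintype.piFinset fun _ => s | Q x v}, ∏ j, w j.succ (v j) := by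
  have hsplit : Fintype.piFinset (fun _ : Fin (n + 1) => s) =
      (s ×ˢ Fintype.piFinset fun _ : Fin n => s).map (Fin.consEquiv fun _ => α).toEmbedding := by
    have := filter_piFinset_eq_map_consEquiv (fun _ : Fin (n + 1) => s) fun _ => True
    simp only [filter_true] at this
    exact this
  rw [sum_filter, hsplit, sum_map, sum_product, sum_filter]
  refine sum_congr rfl fun x _ => ?_
  split_ifs with hx
  · simp [Fin.consEquiv, hPQ, hx, Fin.prod_univ_succ, mul_sum, sum_filter]
  · simp [Fin.consEquiv, hPQ, hx]

theorem sum_filter_isGappedChain_eq_chainSum {n : ℕ} (h N : ℕ) (κ : Fin n → ℕ)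
    (w : Fin n → ℕ → R) (t : ℕ) (hN : t + (∑ j, (κ j + 1)) * h < N) :
    ∑ v ∈ {v ∈ Fintype.piFinset fun _ => range N | IsGappedChain h κ (Fin.cons t v)},
      ∏ j, w j (v j) = chainSum h κ w t := by
  induction n generalizing t with
  | zero => simp [chainSum, IsGappedChain]
  | succ n ih =>
    have hN' : ∀ x ∈ Ioo (t + κ 0 * h) (t + (κ 0 + 1) * h),
        x + (∑ j, (Fin.tail κ j + 1)) * h < N := fun x hx => by
      simp only [mem_Ioo, Fin.sum_univ_succ, Fin.tail, add_mul, one_mul] at hx hN ⊢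
      omega
    have hIoo : {x ∈ range N | t + κ 0 * h < x ∧ x < t + (κ 0 + 1) * h} =
        Ioo (t + κ 0 * h) (t + (κ 0 + 1) * h) := by
      ext x
      simp only [mem_filter, mem_range]
      exact ⟨fun hx => mem_Ioo.mpr hx.2,
        fun hx => ⟨by have := hN' x hx; omega, mem_Ioo.mp hx⟩⟩
    rw [sum_filter_piFinset_succ (p := fun x => t + κ 0 * h < x ∧ x < t + (κ 0 + 1) * h)
      (Q := fun x v => IsGappedChain h (Fin.tail κ) (Fin.cons x v)) _ _
      fun x v => by rw [isGappedChain_cons, Fin.cons_zero], hIoo, chainSum]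
    exact sum_congr rfl fun x hx => by rw [ih _ _ _ (hN' x hx)]; rfl

theorem sum_filter_isGappedChain_eq_sum_range_chainSum {n : ℕ} (h : ℕ) (κ : Fin (n + 1) → ℕ)
    (w : Fin (n + 1) → ℕ → R) :
    ∑ u ∈ {u ∈ Fintype.piFinset fun _ => range ((∑ i, (κ i + 1)) * h + 1) |
        u 0 < h ∧ IsGappedChain h (fun j => κ j.castSucc) u}, ∏ i, w i (u i) =
      ∑ x ∈ range h, w 0 x * chainSum h (fun j => κ j.castSucc) (Fin.tail w) x := by
  have hN : ∀ x < h, x + (∑ j : Fin n, (κ j.castSucc + 1)) * h < (∑ i, (κ i + 1)) * h + 1 :=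
    fun x hx => by
      simp only [Fin.sum_univ_castSucc, add_mul, one_mul]
      omega
  have hrange : {x ∈ range ((∑ i, (κ i + 1)) * h + 1) | x < h} = range h := by
    ext x
    simp only [mem_filter, mem_range, and_iff_right_iff_imp]
    exact fun hx => by have := hN x hx; omega
  rw [sum_filter_piFinset_succ (p := (· < h))
    (Q := fun x v => IsGappedChain h (fun j => κ j.castSucc) (Fin.cons x v)) _ _
    (fun x v => Iff.rfl), hrange]
  exact sum_congr rfl fun x hx => by
    rw [sum_filter_isGappedChain_eq_chainSum _ _ _ _ x (hN x (mem_range.mp hx))]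
    rfl

end GappedChain

theorem add_sum_tail_add_one {n : ℕ} (l : Fin (n + 1) → ℕ) :
    l 0 + (∑ j, Fin.tail l j + n) + 1 = ∑ i, l i + (n + 1) := by
  simp only [Fin.sum_univ_succ, Fin.tail]
  ring

-- Only for `0 < h`: at `h = 0` the windows `(t + κh, t + (κ + 1)h)` are empty, while the
-- quasi-polynomial counts `h - 1 = -1` points in them.
theorem exists_quasiPoly_eq_chainSum {K : Type*} [Field K] [CharZero K] {c n : ℕ}
    (l κ : Fin n → ℕ) (η : Fin n → K) (hη : ∀ j, η j ^ c = 1) :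
    ∃ G ∈ quasiPoly c (∑ j, l j + n), ∀ h, 0 < h → ∀ t,
      chainSum h κ (fun j (x : ℕ) => η j ^ x * (x : K) ^ l j) t = G h t := by
  induction n with
  | zero => exact ⟨fun _ _ => 1, const_mem_quasiPoly _ _, fun h _ t => rfl⟩
  | succ n ih =>
    obtain ⟨G, hG, hGeq⟩ := ih (Fin.tail l) (Fin.tail κ) (Fin.tail η) fun j => hη j.succ
    set F : ℕ → ℕ → K := (fun (_ x : ℕ) => η 0 ^ x * (x : K) ^ l 0) * G
    have hF : F ∈ quasiPoly c (l 0 + (∑ j, Fin.tail l j + n)) :=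
      mul_mem_quasiPoly (monomial_right_mem_quasiPoly le_rfl (hη 0)) hG
    refine ⟨fun h t => ∑ v ∈ range h, F h (t + κ 0 * h + v) - F h (t + κ 0 * h), ?_, ?_⟩
    · rw [← add_sum_tail_add_one]
      exact sub_mem (comp_shear_mem_quasiPoly (κ 0) (sum_range_add_mem_quasiPoly hF))
        (quasiPoly_mono (Nat.le_succ _) (comp_shear_mem_quasiPoly (κ 0) hF))
    · intro h hh t
      rw [chainSum, add_one_mul, ← add_assoc, sum_Ioo_eq_sum_range_sub _ _ hh]
      simp only [F, Pi.mul_apply, ← hGeq h hh]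
      rfl

theorem prevOr0_gaps_iff_isGappedChain {n : ℕ} (h : ℕ) (κ : Fin (n + 1) → ℕ)
    (u : Fin (n + 1) → ℕ) :
    (∀ i : Fin (n + 1), 0 < (i : ℕ) →
      (prevOr0 u i + κ ⟨(i : ℕ) - 1, lt_of_le_of_lt (Nat.sub_le _ _) i.isLt⟩ * h < u i ∧
        u i < prevOr0 u i + (κ ⟨(i : ℕ) - 1, lt_of_le_of_lt (Nat.sub_le _ _) i.isLt⟩ + 1) * h)) ↔
      IsGappedChain h (fun j => κ j.castSucc) u := by
  simp only [Fin.forall_fin_succ, IsGappedChain, prevOr0, Fin.val_pos_iff, Fin.succ_pos,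
    lt_self_iff_false, IsEmpty.forall_iff, forall_const, true_and, dite_true, Fin.val_succ,
    add_tsub_cancel_right]
  rfl

/-- The gapped twisted multiple power sum
`S_h = ∑_{u_1<h, u_{i-1}+κ_{i-1}h < u_i < u_{i-1}+(κ_{i-1}+1)h}
(ε_2/ε_1)^{u_1}⋯(1/ε_r)^{u_r} u_1^{l_1}⋯u_r^{l_r}`
is quasi-polynomial in `h`: there are coefficients `B_{l,ξ} ∈ ℚ(μ_c)`, for
`0 ≤ l ≤ l_1+⋯+l_r+r` and `ξ ∈ μ_c`, with `S_h = ∑_{l,ξ} B_{l,ξ} h^l ξ^h` for all `h ≥ 1`. -/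
theorem gapped_sum_quasi_polynomial {K : Type*} [Field K] [CharZero K]
    (c r : ℕ) (hc : 0 < c) (hr : 0 < r)
    (l : Fin r → ℕ) (κ : Fin r → ℕ) (ε : Fin r → K) (hε : ∀ i, ε i ^ c = 1) :
    ∃ B : ℕ → K → K,
      ∀ h : ℕ, 0 < h →
        (∑ u ∈ (Fintype.piFinset fun _ : Fin r => Finset.range ((∑ i, (κ i + 1)) * h + 1)).filter
            (fun u => u ⟨0, hr⟩ < h ∧
              ∀ i : Fin r, 0 < (i : ℕ) →
                (prevOr0 u i + κ ⟨(i : ℕ) - 1, lt_of_le_of_lt (Nat.sub_le _ _) i.isLt⟩ * h < u i ∧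
                 u i < prevOr0 u i +
                   (κ ⟨(i : ℕ) - 1, lt_of_le_of_lt (Nat.sub_le _ _) i.isLt⟩ + 1) * h)),
          ∏ i : Fin r,
            ((if hi : (i : ℕ) + 1 < r then ε ⟨(i : ℕ) + 1, hi⟩ else 1) / ε i) ^ u i *
              (u i : K) ^ l i) =
        ∑ l' ∈ Finset.range (∑ i, l i + r + 1), ∑ ξ ∈ Polynomial.nthRootsFinset c (1 : K),
          B l' ξ * (h : K) ^ l' * ξ ^ h := by
  obtain ⟨n, rfl⟩ : ∃ n, r = n + 1 := ⟨r - 1, by omega⟩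
  set δ : Fin (n + 1) → K := fun i =>
    (if hi : (i : ℕ) + 1 < n + 1 then ε ⟨(i : ℕ) + 1, hi⟩ else 1) / ε i
  have hδ : ∀ i, δ i ^ c = 1 := fun i => by
    simp only [δ, div_pow, hε, div_one]
    split_ifs <;> simp [hε]
  obtain ⟨G, hG, hGeq⟩ := exists_quasiPoly_eq_chainSum (Fin.tail l) (fun j => κ j.castSucc)
    (Fin.tail δ) fun j => hδ j.succ
  have hS := sum_range_add_mem_quasiPoly
    (mul_mem_quasiPoly (monomial_right_mem_quasiPoly (b := l 0) le_rfl (hδ 0)) hG)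
  rw [add_sum_tail_add_one] at hS
  obtain ⟨B, hB⟩ := exists_coeffs_of_mem_quasiPoly hc hS
  refine ⟨B, fun h hh => ?_⟩
  rw [filter_congr (q := fun u => u 0 < h ∧ IsGappedChain h (fun j => κ j.castSucc) u)
      fun u _ => by rw [prevOr0_gaps_iff_isGappedChain]; rfl,
    sum_filter_isGappedChain_eq_sum_range_chainSum h κ fun i (x : ℕ) => δ i ^ x * (x : K) ^ l i,
    ← hB h]
  refine sum_congr rfl fun x _ => ?_
  rw [zero_add]
  exact congrArg (δ 0 ^ x * (x : K) ^ l 0 * ·) (hGeq h hh x)
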